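/- Let H be a DAG and suppose u and v are two distinct sources of H such that some vertex w is reachable from both u and v but is not reachable from any other source. Then in every DAG elimination forest of H of depth realizing dtd(H), the sources u and v lie on a common root-to-leaf path (one is an ancestor of the other). -/

import Mathlib

open Set

namespace DagPaper

variable {V : Type*}

/-- Adjacency of a digraph restricted to a vertex set `A`. -/
def restrAdj (Adj : V → V → Prop) (A : Set V) : V → V → Prop :=
  fun u v => u ∈ A ∧ v ∈ A ∧ Adj u v

/-- Underlying undirected (symmetrized) adjacency restricted to `A`. -/
def symAdj (Adj : V → V → Prop) (A : Set V) : V → V → Prop :=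
  fun u v => restrAdj Adj A u v ∨ restrAdj Adj A v u

/-- `v` is a source (indegree zero) of the sub-DAG induced on `A`. -/
def IsSource (Adj : V → V → Prop) (A : Set V) (v : V) : Prop :=
  v ∈ A ∧ ∀ u ∈ A, ¬ Adj u v

/-- Vertices reachable from `s` by directed paths inside `A` (including `s`). -/
def Reach (Adj : V → V → Prop) (A : Set V) (s : V) : Set V :=
  {v | Relation.ReflTransGen (restrAdj Adj A) s v}

/-- Vertices reachable from a set of vertices `S` inside `A`. -/
def ReachSet (Adj : V → V → Prop) (A : Set V) (S : Set V) : Set V :=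
  ⋃ s ∈ S, Reach Adj A s

/-- Connected component of `v` in the underlying undirected graph induced on `A`. -/
def Comp (Adj : V → V → Prop) (A : Set V) (v : V) : Set V :=
  {u | Relation.ReflTransGen (symAdj Adj A) v u}

/-- The digraph `Adj` is acyclic. -/
def Acyclic (Adj : V → V → Prop) : Prop := ∀ v, ¬ Relation.TransGen Adj v v

/-- `dtdLE Adj A n`: the sub-DAG induced on `A` admits a DAG elimination forest of
depth at most `n`: each connected component is emptied by repeatedly choosing a
source `s` and deleting `s` together with all vertices reachable from it. -/
inductive dtdLE (Adj : V → V → Prop) : Set V → ℕ → Prop where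
  | empty (n : ℕ) : dtdLE Adj ∅ n
  | step (A : Set V) (n : ℕ) (s : V → V)
      (hs : ∀ v ∈ A, IsSource Adj (Comp Adj A v) (s v))
      (h : ∀ v ∈ A, dtdLE Adj (Comp Adj A v \ Reach Adj (Comp Adj A v) (s v)) n) :
      dtdLE Adj A (n + 1)

/-- DAG treedepth of a DAG: minimum depth of a DAG elimination forest. -/
noncomputable def dtd (Adj : V → V → Prop) : ℕ := sInf {n | dtdLE Adj Set.univ n}

/-- `IsEF Adj A anc n`: there is a DAG elimination forest for the sub-DAG on `A`,
of depth at most `n`, whose ancestor relation is contained in `anc`: whenever a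
source `s` is chosen as a root of a component, `anc s u` holds for every vertex
`u` remaining below it. -/
inductive IsEF (Adj : V → V → Prop) : Set V → (V → V → Prop) → ℕ → Prop where
  | empty (anc : V → V → Prop) (n : ℕ) : IsEF Adj ∅ anc n
  | step (A : Set V) (anc : V → V → Prop) (n : ℕ) (s : V → V)
      (hs : ∀ v ∈ A, IsSource Adj (Comp Adj A v) (s v))
      (hanc : ∀ v ∈ A, ∀ u ∈ Comp Adj A v \ Reach Adj (Comp Adj A v) (s v), anc (s v) u)
      (h : ∀ v ∈ A, IsEF Adj (Comp Adj A v \ Reach Adj (Comp Adj A v) (s v)) anc n) :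
      IsEF Adj A anc (n + 1)

/-- `Adj` is an acyclic orientation of the undirected simple graph `G`. -/
structure IsAcyclicOrientation (G : SimpleGraph V) (Adj : V → V → Prop) : Prop where
  subset : ∀ u v, Adj u v → G.Adj u v
  covers : ∀ u v, G.Adj u v → Adj u v ∨ Adj v u
  antisymm : ∀ u v, Adj u v → ¬ Adj v u
  acyclic : Acyclic Adj

/-- `tdLE G A n`: the subgraph of `G` induced on `A` admits an elimination forest of
depth at most `n` (classical treedepth). -/
inductive tdLE (G : SimpleGraph V) : Set V → ℕ → Prop where
  | empty (n : ℕ) : tdLE G ∅ n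
  | step (A : Set V) (n : ℕ) (r : V → V)
      (hr : ∀ v ∈ A, r v ∈ Comp G.Adj A v)
      (h : ∀ v ∈ A, tdLE G (Comp G.Adj A v \ {r v}) n) :
      tdLE G A (n + 1)

/-- Treedepth of an undirected graph. -/
noncomputable def td (G : SimpleGraph V) : ℕ := sInf {n | tdLE G Set.univ n}

/-- `I` is a minor of `H`, via branch sets. -/
def IsMinor {W : Type*} (I : SimpleGraph W) (H : SimpleGraph V) : Prop :=
  ∃ B : W → Set V, (∀ a, (B a).Nonempty) ∧
    (∀ a, ∀ x ∈ B a, ∀ y ∈ B a,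
      Relation.ReflTransGen (fun p q => p ∈ B a ∧ q ∈ B a ∧ H.Adj p q) x y) ∧
    (∀ a b, a ≠ b → Disjoint (B a) (B b)) ∧
    (∀ a b, I.Adj a b → ∃ x ∈ B a, ∃ y ∈ B b, H.Adj x y)

/-- `I` is an induced minor of `H` (vertex deletions and edge contractions),
via branch sets. -/
def IsInducedMinor {W : Type*} (I : SimpleGraph W) (H : SimpleGraph V) : Prop :=
  ∃ B : W → Set V, (∀ a, (B a).Nonempty) ∧
    (∀ a, ∀ x ∈ B a, ∀ y ∈ B a,
      Relation.ReflTransGen (fun p q => p ∈ B a ∧ q ∈ B a ∧ H.Adj p q) x y) ∧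
    (∀ a b, a ≠ b → Disjoint (B a) (B b)) ∧
    (∀ a b, a ≠ b → (I.Adj a b ↔ ∃ x ∈ B a, ∃ y ∈ B b, H.Adj x y))

/-- `G'` is obtained from `G` by contracting the single edge `{u, v}`, with
quotient map `f`. -/
def IsEdgeContraction {W : Type*} (G : SimpleGraph V) (G' : SimpleGraph W)
    (f : V → W) (u v : V) : Prop :=
  G.Adj u v ∧ f u = f v ∧ Function.Surjective f ∧
  (∀ x y, f x = f y → x ≠ y → (x = u ∧ y = v) ∨ (x = v ∧ y = u)) ∧
  (∀ a b, G'.Adj a b ↔ a ≠ b ∧ ∃ x y, f x = a ∧ f y = b ∧ G.Adj x y)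

/-- `k` lies on the (unique, in a tree) path between `i` and `j`:
every walk from `i` to `j` passes through `k`. -/
def OnPath {ι : Type*} (T : SimpleGraph ι) (i k j : ι) : Prop :=
  ∀ p : T.Walk i j, k ∈ p.support

/-- A DAG tree decomposition of the DAG `Adj` (Bressan). -/
structure DagTreeDecomp (Adj : V → V → Prop) (ι : Type*) where
  tree : SimpleGraph ι
  conn : tree.Connected
  acyc : tree.IsAcyclic
  bags : ι → Set V
  bags_sources : ∀ i, ∀ v ∈ bags i, IsSource Adj Set.univ v
  cover : ∀ v, IsSource Adj Set.univ v → ∃ i, v ∈ bags i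
  reach : ∀ i k j, OnPath tree i k j →
    ReachSet Adj Set.univ (bags i) ∩ ReachSet Adj Set.univ (bags j)
      ⊆ ReachSet Adj Set.univ (bags k)

/-- The DAG has a DAG tree decomposition of width (max bag size) at most `w`. -/
def dtwLE (Adj : V → V → Prop) (w : ℕ) : Prop :=
  ∃ (ι : Type) (D : DagTreeDecomp Adj ι), ∀ i, (D.bags i).ncard ≤ w

/-- DAG treewidth of a DAG. -/
noncomputable def dtw (Adj : V → V → Prop) : ℕ := sInf {w | dtwLE Adj w}

/-- A tree decomposition of an undirected graph. -/
structure TreeDecomp (G : SimpleGraph V) (ι : Type*) where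
  tree : SimpleGraph ι
  conn : tree.Connected
  acyc : tree.IsAcyclic
  bags : ι → Set V
  vcover : ∀ v, ∃ i, v ∈ bags i
  ecover : ∀ u v, G.Adj u v → ∃ i, u ∈ bags i ∧ v ∈ bags i
  vconn : ∀ v i k j, v ∈ bags i → v ∈ bags j → OnPath tree i k j → v ∈ bags k

/-- `G` has a tree decomposition of width at most `w` (bags of size ≤ w + 1). -/
def twLE (G : SimpleGraph V) (w : ℕ) : Prop :=
  ∃ (ι : Type) (D : TreeDecomp G ι), ∀ i, (D.bags i).ncard ≤ w + 1

/-- Treewidth of an undirected graph. -/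
noncomputable def tw (G : SimpleGraph V) : ℕ := sInf {w | twLE G w}

/-- A generalized hypertree decomposition of the hypergraph with hyperedge set `E`. -/
structure GHD {Vh : Type*} (E : Set (Set Vh)) (ι : Type*) where
  tree : SimpleGraph ι
  conn : tree.Connected
  acyc : tree.IsAcyclic
  vbags : ι → Set Vh
  ecov : ι → Set (Set Vh)
  ecov_mem : ∀ i, ecov i ⊆ E
  edge_cover : ∀ e ∈ E, ∃ i, e ⊆ vbags i
  vconn : ∀ v i k j, v ∈ vbags i → v ∈ vbags j → OnPath tree i k j → v ∈ vbags k
  guard : ∀ i, vbags i ⊆ ⋃ e ∈ ecov i, e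

/-- The hypergraph has a generalized hypertree decomposition of width at most `w`. -/
def ghwLE {Vh : Type*} (E : Set (Set Vh)) (w : ℕ) : Prop :=
  ∃ (ι : Type) (D : GHD E ι), ∀ i, (D.ecov i).ncard ≤ w

/-- Generalized hypertree width. -/
noncomputable def ghw {Vh : Type*} (E : Set (Set Vh)) : ℕ := sInf {w | ghwLE E w}

section Aux

variable {Adj : V → V → Prop} {A B : Set V}

lemma reach_mono (hBA : B ⊆ A) (s : V) : Reach Adj B s ⊆ Reach Adj A s := by
  intro x hx
  exact Relation.ReflTransGen.mono (r := restrAdj Adj B) (p := restrAdj Adj A)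
    (fun a b h => ⟨hBA h.1, hBA h.2.1, h.2.2⟩) _ _ hx

lemma comp_subset {c : V} (hc : c ∈ A) : Comp Adj A c ⊆ A := by
  intro x hx
  induction hx with
  | refl => exact hc
  | tail _ e _ =>
    rcases e with e | e
    · exact e.2.1
    · exact e.1

lemma symAdj_symm : Symmetric (symAdj Adj A) := fun _ _ h => h.symm

lemma comp_eq_of_mem {c x : V} (hx : x ∈ Comp Adj A c) :
    Comp Adj A x = Comp Adj A c := by
  have hsym : Symmetric (Relation.ReflTransGen (symAdj Adj A)) :=
    by haveI : Std.Symm (symAdj Adj A) := ⟨symAdj_symm⟩; exact fun _ _ h => Std.Symm.symm _ _ h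
  ext y
  constructor
  · intro hy; exact Relation.ReflTransGen.trans hx hy
  · intro hy; exact Relation.ReflTransGen.trans (hsym hx) hy

lemma reach_subset_comp (c : V) : Reach Adj A c ⊆ Comp Adj A c := by
  intro x hx
  exact Relation.ReflTransGen.mono (r := restrAdj Adj A) (p := symAdj Adj A)
    (fun a b h => Or.inl h) _ _ hx

lemma reach_source_eq (hBA : B ⊆ A) {s t : V} (ht : IsSource Adj A t)
    (h : t ∈ Reach Adj B s) : s = t := by
  rcases Relation.ReflTransGen.cases_tail h with h' | ⟨c, _, hct⟩
  · exact h'.symm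
  · exact absurd hct.2.2 (ht.2 c (hBA hct.1))

lemma source_anti (ht : IsSource Adj A t) (hBA : B ⊆ A) (htB : t ∈ B) :
    IsSource Adj B t := ⟨htB, fun x hx => ht.2 x (hBA hx)⟩

/-- A directed path inside `A` starting in the component of `c` stays in that
component. -/
lemma reach_in_comp {c x : V} (hx : x ∈ Comp Adj A c) :
    Reach Adj A x ⊆ Reach Adj (Comp Adj A c) x := by
  intro y hy
  have : y ∈ Comp Adj A c ∧ y ∈ Reach Adj (Comp Adj A c) x := by
    induction hy with
    | refl => exact ⟨hx, Relation.ReflTransGen.refl⟩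
    | tail _ e ih =>
      have hb := ih.1
      have hyC : _ ∈ Comp Adj A c := Relation.ReflTransGen.tail hb (Or.inl e)
      exact ⟨hyC, Relation.ReflTransGen.tail ih.2 ⟨hb, hyC, e.2.2⟩⟩
  exact this.2

/-- A directed path inside `C` that ends outside `Reach C s₀` avoids
`Reach C s₀` entirely. -/
lemma reach_avoid {C : Set V} {s₀ x y : V}
    (h : y ∈ Reach Adj C x) (hy : y ∉ Reach Adj C s₀) (hx : x ∉ Reach Adj C s₀) :
    y ∈ Reach Adj (C \ Reach Adj C s₀) x := by
  induction h using Relation.ReflTransGen.head_induction_on with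
  | refl => exact Relation.ReflTransGen.refl
  | head e hcy ih =>
    rename_i a c
    have hcR : c ∉ Reach Adj C s₀ := by
      intro hc
      exact hy (Relation.ReflTransGen.trans hc
        (Relation.ReflTransGen.mono (r := restrAdj Adj C) (p := restrAdj Adj C)
          (fun p q h => h) _ _ hcy))
    exact Relation.ReflTransGen.head ⟨⟨e.1, hx⟩, ⟨e.2.1, hcR⟩, e.2.2⟩ (ih hcR)

/-- In a finite acyclic digraph, every vertex of `A` is reachable from some
source of `A`. -/
lemma exists_source_reach [Finite V] (hacyc : Acyclic Adj) {x : V} (hx : x ∈ A) :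
    ∃ t, IsSource Adj A t ∧ x ∈ Reach Adj A t := by
  haveI : IsTrans V (Relation.TransGen (restrAdj Adj A)) := inferInstance
  haveI : IsIrrefl V (Relation.TransGen (restrAdj Adj A)) := by
    constructor
    intro a ha
    exact hacyc a (Relation.TransGen.mono (r := restrAdj Adj A) (p := Adj) (fun p q h => h.2.2) _ _ ha)
  have hwf : WellFounded (Relation.TransGen (restrAdj Adj A)) :=
    Finite.wellFounded_of_trans_of_irrefl _
  have hwf' : WellFounded (restrAdj Adj A) :=
    Subrelation.wf (fun h => Relation.TransGen.single h) hwf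
  induction x using hwf'.induction with
  | _ x ih =>
    by_cases hsrc : ∀ y ∈ A, ¬ Adj y x
    · exact ⟨x, ⟨hx, hsrc⟩, Relation.ReflTransGen.refl⟩
    · push_neg at hsrc
      obtain ⟨y, hyA, hyx⟩ := hsrc
      obtain ⟨t, ht, hr⟩ := ih y ⟨hyA, hx, hyx⟩ hyA
      exact ⟨t, ht, Relation.ReflTransGen.tail hr ⟨hyA, hx, hyx⟩⟩

/-- A source of a connected component of `A` is a source of `A`. -/
lemma source_of_comp {c s₀ : V} (hc : c ∈ A)
    (hs : IsSource Adj (Comp Adj A c) s₀) : IsSource Adj A s₀ := by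
  have hsA : s₀ ∈ A := comp_subset hc hs.1
  refine ⟨hsA, fun x hxA hadj => ?_⟩
  have hxC : x ∈ Comp Adj A c := by
    have : x ∈ Comp Adj A s₀ :=
      Relation.ReflTransGen.single (Or.inr ⟨hxA, hsA, hadj⟩ : symAdj Adj A s₀ x)
    rwa [comp_eq_of_mem hs.1] at this
  exact hs.2 x hxC hadj

lemma key [Finite V] (hacyc : Acyclic Adj) {u v w : V} (huv : u ≠ v) :
    ∀ {A : Set V} {anc : V → V → Prop} {n : ℕ}, IsEF Adj A anc n →
      IsSource Adj A u → IsSource Adj A v →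
      w ∈ Reach Adj A u → w ∈ Reach Adj A v →
      (∀ t, IsSource Adj A t → t ≠ u → t ≠ v → w ∉ Reach Adj A t) →
      anc u v ∨ anc v u := by
  intro A anc n hEF
  induction hEF with
  | empty anc n =>
    intro hu _ _ _ _
    exact hu.1.elim
  | step A anc n s hs hanc h IH =>
    intro hu hv hwu hwv hoth
    set C := Comp Adj A u with hCdef
    have hCA : C ⊆ A := comp_subset hu.1
    have hwCu : w ∈ C := reach_subset_comp u hwu
    have hCv : Comp Adj A v = C := by
      have h1 : Comp Adj A w = C := comp_eq_of_mem hwCu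
      have h2 : Comp Adj A w = Comp Adj A v :=
        comp_eq_of_mem (reach_subset_comp v hwv)
      rw [← h1, h2]
    have huC : u ∈ C := Relation.ReflTransGen.refl
    have hvC : v ∈ C := by
      rw [← hCv]; exact Relation.ReflTransGen.refl
    have hs₀ : IsSource Adj C (s u) := hs u hu.1
    have hs₀A : IsSource Adj A (s u) := source_of_comp hu.1 hs₀
    by_cases h1 : s u = u
    · left
      have hvR : v ∉ Reach Adj C (s u) := fun hmem =>
        huv (h1 ▸ reach_source_eq hCA hv hmem)
      have := hanc u hu.1 v ⟨hvC, hvR⟩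
      rwa [h1] at this
    · by_cases h2 : s u = v
      · right
        have huR : u ∉ Reach Adj C (s u) := fun hmem =>
          (huv (h2 ▸ reach_source_eq hCA hu hmem).symm)
        have := hanc u hu.1 u ⟨huC, huR⟩
        rwa [h2] at this
      · -- the chosen source is neither u nor v
        have notR : ∀ t, IsSource Adj A t → t ≠ s u → t ∉ Reach Adj C (s u) :=
          fun t ht hne hmem => hne (reach_source_eq hCA ht hmem).symm
        have huR : u ∉ Reach Adj C (s u) := notR u hu (fun e => h1 e.symm)
        have hvR : v ∉ Reach Adj C (s u) := notR v hv (fun e => h2 e.symm)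
        have hwR : w ∉ Reach Adj C (s u) := fun hmem =>
          hoth (s u) hs₀A h1 h2 (reach_mono hCA (s u) hmem)
        set A' := C \ Reach Adj C (s u) with hA'def
        have hA'C : A' ⊆ C := Set.diff_subset
        have hA'A : A' ⊆ A := hA'C.trans hCA
        have huA' : u ∈ A' := ⟨huC, huR⟩
        have hvA' : v ∈ A' := ⟨hvC, hvR⟩
        have hu' : IsSource Adj A' u := source_anti hu hA'A huA'
        have hv' : IsSource Adj A' v := source_anti hv hA'A hvA'
        have hwu' : w ∈ Reach Adj A' u :=
          reach_avoid (reach_in_comp huC hwu) hwR huR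
        have hwv' : w ∈ Reach Adj A' v := by
          have : w ∈ Reach Adj (Comp Adj A v) v := reach_in_comp
            (Relation.ReflTransGen.refl) hwv
          rw [hCv] at this
          exact reach_avoid this hwR hvR
        have hoth' : ∀ t, IsSource Adj A' t → t ≠ u → t ≠ v →
            w ∉ Reach Adj A' t := by
          intro t ht htu htv hmem
          have htA : t ∈ A := hA'A ht.1
          obtain ⟨t₀, ht₀, htr⟩ := exists_source_reach hacyc htA
          have hwA : w ∈ Reach Adj A t₀ :=
            Relation.ReflTransGen.trans htr (reach_mono hA'A t hmem)
          have ht₀uv : t₀ = u ∨ t₀ = v := by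
            by_contra hcon
            push_neg at hcon
            exact hoth t₀ ht₀ hcon.1 hcon.2 hwA
          have key : ∀ a : V, a ∈ C → a ∉ Reach Adj C (s u) → a ≠ t →
              t ∈ Reach Adj A a → False := by
            intro a haC haR hat htr'
            have htC : t ∈ Reach Adj C a := reach_in_comp haC htr'
            have htA' : t ∈ Reach Adj A' a := reach_avoid htC ht.1.2 haR
            exact hat (reach_source_eq (le_refl A') ht htA')
          rcases ht₀uv with rfl | rfl
          · exact key t₀ huC huR htu.symm htr
          · exact key t₀ hvC hvR htv.symm htr
        exact IH u hu.1 hu' hv' hwu' hwv' hoth'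

end Aux

/-- if `w` is reachable exactly from the two sources `u` and `v`, then in
any DAG elimination forest of depth realizing `dtd`, `u` and `v` are comparable
(one is an ancestor of the other). -/
theorem sources_comparable_in_elim_forest {V : Type*} [Fintype V] (Adj : V → V → Prop)
    (hacyc : Acyclic Adj) (u v w : V) (huv : u ≠ v)
    (hu : IsSource Adj Set.univ u) (hv : IsSource Adj Set.univ v)
    (hwu : w ∈ Reach Adj Set.univ u) (hwv : w ∈ Reach Adj Set.univ v)
    (hother : ∀ s, IsSource Adj Set.univ s → s ≠ u → s ≠ v → w ∉ Reach Adj Set.univ s)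
    (anc : V → V → Prop) (hEF : IsEF Adj Set.univ anc (dtd Adj)) :
    anc u v ∨ anc v u :=
  key hacyc huv hEF hu hv hwu hwv hother

end DagPaper
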